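/- Depth of quantile envelopes and of functions in the pointwise central region: Fix γ ∈ (0,1) and assume every marginal CDF F_t is continuous on ℝ. Then: (i) D_{q_{γ/2}}(t) = γ = D_{q_{1−γ/2}}(t) for every t ∈ I; hence Φ_{q_{γ/2}} = Φ_{q_{1−γ/2}} and q_{γ/2} ∼ q_{1−γ/2}. (ii) Every Borel measurable f : I → ℝ with q_{γ/2}(t) ≤ f(t) ≤ q_{1−γ/2}(t) for all t ∈ I satisfies D_f(t) ≥ γ for all t ∈ I, Φ_f(r) ≤ Φ_{q_{γ/2}}(r) for all r ∈ [0,1], and f ⪰ q_{γ/2}. -/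

import Mathlib

open MeasureTheory Set Filter
open scoped NNReal ENNReal symmDiff

noncomputable section

/-- The space `C(I, ℝ)` of continuous real-valued functions on `I = [0,1]`,
equipped with the sup metric. -/
abbrev FSp := C(unitInterval, ℝ)

/-- Borel σ-algebra on `C(I, ℝ)`. -/
instance : MeasurableSpace FSp := borel FSp
instance : BorelSpace FSp := ⟨rfl⟩

/-- Pointwise depth `D_g(t) = 1 - |P{x : x(t) > g(t)} - P{x : x(t) < g(t)}|`. -/
def pdepth (P : Measure FSp) (g : unitInterval → ℝ) (t : unitInterval) : ℝ :=
  1 - |(P {x : FSp | g t < x t}).toReal - (P {x : FSp | x t < g t}).toReal|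

/-- Depth CDF (d-CDF) `Φ_g(r) = Leb{t ∈ I : D_g(t) ≤ r}`. -/
def dcdf (P : Measure FSp) (g : unitInterval → ℝ) (r : ℝ) : ℝ :=
  (volume {t : unitInterval | pdepth P g t ≤ r}).toReal

/-- The set `R(g,h) = {r ∈ [0,1] : Φ_g(r) ≠ Φ_h(r)}`. -/
def Rset (P : Measure FSp) (g h : unitInterval → ℝ) : Set ℝ :=
  {r ∈ Icc (0:ℝ) 1 | dcdf P g r ≠ dcdf P h r}

/-- `g ≺ h`: `g` is more extreme than `h`, i.e. `R(g,h)` is nonempty and, with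
`r* = inf R(g,h)`, there is `δ > 0` with `Φ_g(r) > Φ_h(r)` for all
`r ∈ (r*, r*+δ) ∩ [0,1]`.  `g ⪰ h` is `¬ prec P g h`. -/
def prec (P : Measure FSp) (g h : unitInterval → ℝ) : Prop :=
  (Rset P g h).Nonempty ∧
  ∃ δ > 0, ∀ r ∈ Ioo (sInf (Rset P g h)) (sInf (Rset P g h) + δ) ∩ Icc (0:ℝ) 1,
    dcdf P h r < dcdf P g r

/-- Extremal depth `ED(g,P) = P*{x ∈ C(I,ℝ) : g ⪰ x}` (a measure applied to an
arbitrary set is the induced outer measure). -/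
def ed (P : Measure FSp) (g : unitInterval → ℝ) : ℝ :=
  (P {x : FSp | ¬ prec P g ⇑x}).toReal

/-- Minimal depth level `d_f = inf{r ∈ [0,1] : Φ_f(r) > 0}`. -/
def dmin (P : Measure FSp) (f : unitInterval → ℝ) : ℝ :=
  sInf {r ∈ Icc (0:ℝ) 1 | 0 < dcdf P f r}

/-- Marginal CDF `F_t(y) = P{x : x(t) ≤ y}`. -/
def margF (P : Measure FSp) (t : unitInterval) (y : ℝ) : ℝ :=
  (P {x : FSp | x t ≤ y}).toReal

/-- Pointwise quantile function `q_a(t) = inf{y : F_t(y) ≥ a}`. -/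
def quant (P : Measure FSp) (a : ℝ) (t : unitInterval) : ℝ :=
  sInf {y : ℝ | a ≤ margF P t y}

/-- Lower envelope `f_L(t) = inf{f(t) : f ∈ C(I,ℝ), ED(f,P) > α}`. -/
def envL (P : Measure FSp) (α : ℝ) (t : unitInterval) : ℝ :=
  sInf ((fun f : FSp => f t) '' {f : FSp | α < ed P ⇑f})

/-- Upper envelope `f_U(t) = sup{f(t) : f ∈ C(I,ℝ), ED(f,P) > α}`. -/
def envU (P : Measure FSp) (α : ℝ) (t : unitInterval) : ℝ :=
  sSup ((fun f : FSp => f t) '' {f : FSp | α < ed P ⇑f})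

/-- The `(1-α)` extremal-depth central region `C_{1-α}`. -/
def centralRegion (P : Measure FSp) (α : ℝ) : Set FSp :=
  {x : FSp | ∀ t, envL P α t ≤ x t ∧ x t ≤ envU P α t}

/-- Boundary `∂C_{1-α}` of the central region. -/
def centralBoundary (P : Measure FSp) (α : ℝ) : Set FSp :=
  {x ∈ centralRegion P α | ∃ t, x t = envL P α t ∨ x t = envU P α t}

/-
With continuous marginals, `x(t)` has no atoms, so `P{x(t) < y} = F_t(y)` and the pointwise depth
becomes `D_g(t) = 1 - |1 - 2 F_t(g(t))|`. Continuity also gives `F_t(q_α(t)) = α`, hence both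
quantile envelopes have depth `γ` everywhere, while a function squeezed between them has
`F_t(f(t)) ∈ [γ/2, 1 - γ/2]` and therefore depth at least `γ`. Larger pointwise depth means a
smaller d-CDF, and a d-CDF dominated on `[0,1]` can never be the strictly larger one just after
the first point where the two d-CDFs differ.
-/

open ProbabilityTheory

theorem Continuous.apply_sInf_setOf_le_eq {F : ℝ → ℝ} (hF : Continuous F) {a : ℝ}
    (hne : ∃ y, a ≤ F y) (hbdd : BddBelow {y | a ≤ F y}) :
    F (sInf {y | a ≤ F y}) = a := by
  have hmem : sInf {y | a ≤ F y} ∈ {y | a ≤ F y} :=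
    (isClosed_le continuous_const hF).csInf_mem hne hbdd
  refine le_antisymm ?_ hmem
  by_contra! hlt
  obtain ⟨y, hy, hay⟩ := ((hF.tendsto _).eventually (eventually_gt_nhds hlt)).exists_lt
  exact (csInf_le hbdd hay.le).not_gt hy

theorem cdf_sInf_setOf_le_cdf_eq (μ : Measure ℝ) (hc : Continuous (cdf μ)) {a : ℝ}
    (ha : a ∈ Ioo (0 : ℝ) 1) : cdf μ (sInf {y | a ≤ cdf μ y}) = a := by
  refine hc.apply_sInf_setOf_le_eq ((tendsto_cdf_atTop μ).eventually_const_le ha.2).exists ?_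
  obtain ⟨m, hm⟩ :=
    ((tendsto_cdf_atBot μ).eventually (eventually_lt_nhds ha.1)).exists_forall_of_atBot
  exact ⟨m, fun y hy => le_of_not_gt fun hym => (hm y hym.le).not_ge hy⟩

section Marginal

variable {P : Measure FSp} [IsProbabilityMeasure P] {t : unitInterval}

theorem margF_eq_cdf : margF P t = cdf (P.map fun x : FSp => x t) := by
  have hmeas : Measurable fun x : FSp => x t := (continuous_eval_const t).measurable
  have := Measure.isProbabilityMeasure_map (μ := P) hmeas.aemeasurable
  ext y
  rw [cdf_eq_real, measureReal_def, Measure.map_apply hmeas measurableSet_Iic]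
  rfl

theorem margF_mono : Monotone (margF P t) :=
  margF_eq_cdf (P := P) (t := t) ▸ monotone_cdf _

theorem measure_eval_lt_eq_of_continuous (hc : Continuous (margF P t)) (y : ℝ) :
    P {x : FSp | x t < y} = P {x : FSp | x t ≤ y} := by
  have hmeas : Measurable fun x : FSp => x t := (continuous_eval_const t).measurable
  have := Measure.isProbabilityMeasure_map (μ := P) hmeas.aemeasurable
  rw [margF_eq_cdf] at hc
  have hatom : P.map (fun x : FSp => x t) {y} = 0 := by
    rw [← measure_cdf (P.map _), StieltjesFunction.measure_singleton,
      hc.continuousWithinAt.leftLim_eq, sub_self, ENNReal.ofReal_zero]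
  have := measure_congr (Iio_ae_eq_Iic' hatom)
  rwa [Measure.map_apply hmeas measurableSet_Iio, Measure.map_apply hmeas measurableSet_Iic] at this

theorem pdepth_eq_of_continuous (hc : Continuous (margF P t)) (g : unitInterval → ℝ) :
    pdepth P g t = 1 - |1 - 2 * margF P t (g t)| := by
  have hcompl : {x : FSp | g t < x t} = {x : FSp | x t ≤ g t}ᶜ := by
    ext x
    simp
  have hgt : (P {x : FSp | g t < x t}).toReal = 1 - margF P t (g t) := by
    rw [hcompl, ← measureReal_def,
      measureReal_compl (measurableSet_le (continuous_eval_const t).measurable measurable_const),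
      probReal_univ, margF, measureReal_def]
  rw [pdepth, hgt, measure_eval_lt_eq_of_continuous hc, ← margF]
  ring_nf

theorem margF_quant (hc : Continuous (margF P t)) {a : ℝ} (ha : a ∈ Ioo (0 : ℝ) 1) :
    margF P t (quant P a t) = a := by
  rw [margF_eq_cdf] at hc
  rw [quant, margF_eq_cdf]
  exact cdf_sInf_setOf_le_cdf_eq _ hc ha

theorem pdepth_quant (hc : Continuous (margF P t)) {a : ℝ} (ha : a ∈ Ioo (0 : ℝ) 1) :
    pdepth P (quant P a) t = 1 - |1 - 2 * a| := by
  rw [pdepth_eq_of_continuous hc, margF_quant hc ha]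

theorem two_mul_le_pdepth_of_quant_le_of_le_quant (hc : Continuous (margF P t)) {a : ℝ}
    (ha : a ∈ Ioo (0 : ℝ) 1) {g : unitInterval → ℝ} (hlo : quant P a t ≤ g t)
    (hhi : g t ≤ quant P (1 - a) t) : 2 * a ≤ pdepth P g t := by
  have ha' : 1 - a ∈ Ioo (0 : ℝ) 1 := ⟨by linarith [ha.2], by linarith [ha.1]⟩
  have hlo' : a ≤ margF P t (g t) := margF_quant hc ha ▸ margF_mono hlo
  have hhi' : margF P t (g t) ≤ 1 - a := margF_quant hc ha' ▸ margF_mono hhi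
  have habs : |1 - 2 * margF P t (g t)| ≤ 1 - 2 * a := abs_le.2 ⟨by linarith, by linarith⟩
  rw [pdepth_eq_of_continuous hc]
  linarith

end Marginal

section DepthOrder

variable {P : Measure FSp} {g h : unitInterval → ℝ}

theorem pdepth_le_one (t : unitInterval) : pdepth P g t ≤ 1 :=
  sub_le_self _ (abs_nonneg _)

theorem dcdf_one : dcdf P g 1 = 1 := by
  simp [dcdf, pdepth_le_one]

theorem dcdf_le_dcdf_of_pdepth_le (hgh : ∀ t, pdepth P g t ≤ pdepth P h t) (r : ℝ) :
    dcdf P h r ≤ dcdf P g r :=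
  ENNReal.toReal_mono (measure_ne_top _ _) (measure_mono fun t ht => (hgh t).trans ht)

theorem not_prec_of_dcdf_le (hgh : ∀ r ∈ Icc (0 : ℝ) 1, dcdf P g r ≤ dcdf P h r) :
    ¬ prec P g h := by
  rintro ⟨⟨r₁, hr₁⟩, δ, hδ, hlt⟩
  set r₀ := sInf (Rset P g h)
  -- Every d-CDF equals `1` at `r = 1`, so `R(g,h) ⊆ [0,1)` and `(r₀, r₀ + δ)` meets `[0,1]`.
  have hr₁_lt : r₁ < 1 := hr₁.1.2.lt_of_ne fun h1 => hr₁.2 (by rw [h1, dcdf_one, dcdf_one])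
  have hr₀_lt : r₀ < 1 := (csInf_le ⟨0, fun r hr => hr.1.1⟩ hr₁).trans_lt hr₁_lt
  have hr₀_nonneg : 0 ≤ r₀ := le_csInf ⟨r₁, hr₁⟩ fun r hr => hr.1.1
  set r := min (r₀ + δ / 2) 1
  have hr : r ∈ Ioo r₀ (r₀ + δ) ∩ Icc (0 : ℝ) 1 :=
    ⟨⟨lt_min (by linarith) hr₀_lt, (min_le_left _ _).trans_lt (by linarith)⟩,
      le_min (by linarith) zero_le_one, min_le_right _ _⟩
  exact (hgh r hr.2).not_gt (hlt r hr)

end DepthOrder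

/-- **Depth of quantile envelopes and of functions in the pointwise central
region.** -/
theorem quantile_envelope_depth (P : Measure FSp) [IsProbabilityMeasure P]
    (γ : ℝ) (hγ : γ ∈ Ioo (0:ℝ) 1)
    (hFcont : ∀ t : unitInterval, Continuous (margF P t)) :
    ((∀ t : unitInterval,
        pdepth P (quant P (γ/2)) t = γ ∧ pdepth P (quant P (1 - γ/2)) t = γ) ∧
      (∀ r : ℝ, dcdf P (quant P (γ/2)) r = dcdf P (quant P (1 - γ/2)) r) ∧
      (¬ prec P (quant P (γ/2)) (quant P (1 - γ/2)) ∧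
       ¬ prec P (quant P (1 - γ/2)) (quant P (γ/2)))) ∧
    (∀ f : unitInterval → ℝ, Measurable f →
      (∀ t, quant P (γ/2) t ≤ f t ∧ f t ≤ quant P (1 - γ/2) t) →
      (∀ t, γ ≤ pdepth P f t) ∧
      (∀ r ∈ Icc (0:ℝ) 1, dcdf P f r ≤ dcdf P (quant P (γ/2)) r) ∧
      ¬ prec P f (quant P (γ/2))) := by
  obtain ⟨hγ₀, hγ₁⟩ := hγ
  have hlo : γ / 2 ∈ Ioo (0 : ℝ) 1 := ⟨by linarith, by linarith⟩
  have hhi : 1 - γ / 2 ∈ Ioo (0 : ℝ) 1 := ⟨by linarith, by linarith⟩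
  have hdepth_lo : ∀ t, pdepth P (quant P (γ / 2)) t = γ := fun t => by
    rw [pdepth_quant (hFcont t) hlo, abs_of_nonneg (by linarith)]; ring
  have hdepth_hi : ∀ t, pdepth P (quant P (1 - γ / 2)) t = γ := fun t => by
    rw [pdepth_quant (hFcont t) hhi, abs_of_nonpos (by linarith)]; ring
  have hdepth_eq : ∀ t, pdepth P (quant P (γ / 2)) t = pdepth P (quant P (1 - γ / 2)) t :=
    fun t => (hdepth_lo t).trans (hdepth_hi t).symm
  have hdcdf : ∀ r, dcdf P (quant P (γ / 2)) r = dcdf P (quant P (1 - γ / 2)) r := fun r =>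
    le_antisymm (dcdf_le_dcdf_of_pdepth_le (fun t => (hdepth_eq t).ge) r)
      (dcdf_le_dcdf_of_pdepth_le (fun t => (hdepth_eq t).le) r)
  refine ⟨⟨fun t => ⟨hdepth_lo t, hdepth_hi t⟩, hdcdf,
    not_prec_of_dcdf_le fun r _ => (hdcdf r).le, not_prec_of_dcdf_le fun r _ => (hdcdf r).ge⟩,
    fun f _ hf => ?_⟩
  have hdepth_f : ∀ t, γ ≤ pdepth P f t := fun t => by
    linarith [two_mul_le_pdepth_of_quant_le_of_le_quant (hFcont t) hlo (hf t).1 (hf t).2]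
  have hdcdf_f : ∀ r ∈ Icc (0 : ℝ) 1, dcdf P f r ≤ dcdf P (quant P (γ / 2)) r := fun r _ =>
    dcdf_le_dcdf_of_pdepth_le (fun t => (hdepth_lo t).trans_le (hdepth_f t)) r
  exact ⟨hdepth_f, hdcdf_f, not_prec_of_dcdf_le hdcdf_f⟩
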